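/- Assume the walk's steps have a finite (k−1)-st absolute moment, so that V_n(x) is well-defined. Then for every n ∈ ℕ and every x ∈ W one has V_n(x) = E_x[ Δ(X(n)) 1{τ > n} ], and in particular V_n(x) > 0. -/

import Mathlib

open MeasureTheory ProbabilityTheory Filter Topology
open scoped ENNReal NNReal

noncomputable section

namespace OrderedRW

/-- The Weyl chamber `W = {x : x₁ < x₂ < ⋯ < x_k}`. -/
def W (k : ℕ) : Set (Fin k → ℝ) := {x | StrictMono x}

/-- The Vandermonde determinant `Δ(x) = ∏_{i<j} (x_j - x_i)`. -/
def Vdm {k : ℕ} (x : Fin k → ℝ) : ℝ :=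
  ∏ p ∈ Finset.univ.filter (fun p : Fin k × Fin k => p.1 < p.2), (x p.2 - x p.1)

/-- The standard Gaussian density on `ℝ^k`, `e^{-|y|²/2}/(2π)^{k/2}`. -/
def gaussW (k : ℕ) (y : Fin k → ℝ) : ℝ :=
  Real.exp (-(∑ i, (y i) ^ 2) / 2) / (2 * Real.pi) ^ ((k : ℝ) / 2)

/-- `∏_{l=0}^{k-1} 1/l!`. -/
def Kfact (k : ℕ) : ℝ := ∏ l ∈ Finset.range k, (1 : ℝ) / (Nat.factorial l)

/-- `k` independent copies of a random walk on `ℝ` with i.i.d. steps: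
`ξ l i` is the `l`-th step of the `i`-th component, and all the steps
`ξ l i`, `l ∈ ℕ`, `i ∈ Fin k`, are i.i.d. -/
structure Walk (k : ℕ) (Ω : Type) [MeasurableSpace Ω] where
  P : Measure Ω
  prob : IsProbabilityMeasure P
  ξ : ℕ → Fin k → Ω → ℝ
  meas : ∀ l i, Measurable (ξ l i)
  indep : iIndepFun
      (fun p : ℕ × Fin k => ξ p.1 p.2) P
  ident : ∀ l i l' i', IdentDistrib (ξ l i) (ξ l' i') P P

namespace Walk

variable {k : ℕ} {Ω : Type} [MeasurableSpace Ω] (w : Walk k Ω)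

/-- The position `X(n)` of the walk at time `n`, started at `x`. -/
def pos (x : Fin k → ℝ) (n : ℕ) (ω : Ω) : Fin k → ℝ :=
  fun i => x i + ∑ l ∈ Finset.range n, w.ξ l i ω

/-- The first exit time `τ = inf{n : X(n) ∉ W}` from the Weyl chamber (`⊤` if no exit). -/
def tau (x : Fin k → ℝ) (ω : Ω) : ℕ∞ :=
  sInf ((fun n : ℕ => (n : ℕ∞)) '' {n : ℕ | w.pos x n ω ∉ W k})

/-- The stopped position `X(τ)`. -/
def stopped (x : Fin k → ℝ) (ω : Ω) : Fin k → ℝ :=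
  w.pos x ((w.tau x ω).toNat) ω

/-- The event `{τ > t}`. -/
def tauGT (x : Fin k → ℝ) (t : ℝ) : Set Ω :=
  {ω | ∀ m : ℕ, w.tau x ω = (m : ℕ∞) → t < m}

/-- The event `{τ ≥ t}`. -/
def tauGE (x : Fin k → ℝ) (t : ℝ) : Set Ω :=
  {ω | ∀ m : ℕ, w.tau x ω = (m : ℕ∞) → t ≤ m}

/-- The event `{τ ≤ t}`. -/
def tauLE (x : Fin k → ℝ) (t : ℝ) : Set Ω :=
  {ω | ∃ m : ℕ, w.tau x ω = (m : ℕ∞) ∧ (m : ℝ) ≤ t}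

/-- The event `{τ = l}`. -/
def tauEQ (x : Fin k → ℝ) (l : ℕ) : Set Ω := {ω | w.tau x ω = (l : ℕ∞)}

/-- Centering Assumption: the steps have mean zero and variance one. -/
def Centered : Prop :=
  ∀ l i, Integrable (fun ω => (w.ξ l i ω) ^ 2) w.P ∧
    (∫ ω, w.ξ l i ω ∂w.P) = 0 ∧ (∫ ω, (w.ξ l i ω) ^ 2 ∂w.P) = 1

/-- Finiteness of the `μ`-th absolute moment of the steps. -/
def HasMoment (μ : ℝ) : Prop :=
  ∀ l i, Integrable (fun ω => |w.ξ l i ω| ^ μ) w.P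

/-- The `i`-th component of the walk, started at `0`. -/
def S1 (i : Fin k) (n : ℕ) (ω : Ω) : ℝ := ∑ l ∈ Finset.range n, w.ξ l i ω

/-- The lattice case of the Regularity Assumption: the support of the walk started at `0`
is contained in `αℤ` for some minimal `α ∈ (0,∞)`. -/
def IsLattice : Prop :=
  ∃ α : ℝ, 0 < α ∧ (∀ i n, ∀ᵐ ω ∂w.P, ∃ m : ℤ, w.S1 i n ω = α * m) ∧
    ∀ β : ℝ, 0 < β → (∀ i n, ∀ᵐ ω ∂w.P, ∃ m : ℤ, w.S1 i n ω = β * m) → α ≤ β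

/-- The non-lattice case of the Regularity Assumption: `X₁(N)` possesses a bounded density
for some `N ∈ ℕ`. -/
def IsNonLattice : Prop :=
  ∃ N : ℕ, 1 ≤ N ∧ ∃ f : ℝ → ℝ, (∀ y, 0 ≤ f y) ∧ (∃ C : ℝ, ∀ y, f y ≤ C) ∧
    ∀ i, Measure.map (w.S1 i N) w.P = MeasureTheory.volume.withDensity fun y => ENNReal.ofReal (f y)

/-- Regularity Assumption. -/
def Regular : Prop := w.IsLattice ∨ w.IsNonLattice

/-- `V(x) = Δ(x) - E_x[Δ(X(τ))]`. -/
def V (x : Fin k → ℝ) : ℝ := Vdm x - ∫ ω, Vdm (w.stopped x ω) ∂w.P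

/-- `V_n(x) = Δ(x) - E_x[Δ(X(τ)) 1{τ ≤ n}]`. -/
def Vn (n : ℕ) (x : Fin k → ℝ) : ℝ :=
  Vdm x - ∫ ω in w.tauLE x n, Vdm (w.stopped x ω) ∂w.P

/-- The signed measure `𝒟_n(x, dy) = Σ_σ sign(σ) ∏_i P_{x_{σ(i)}}(X₁(n) ∈ dy_i)`,
evaluated at a set `A`; by independence of the components, the product of the one-dimensional
marginals equals the law of the `k`-dimensional walk started at `x ∘ σ`. -/
def Dmeas (n : ℕ) (x : Fin k → ℝ) (A : Set (Fin k → ℝ)) : ℝ :=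
  ∑ σ : Equiv.Perm (Fin k),
    ((Equiv.Perm.sign σ : ℤ) : ℝ) * (w.P {ω | w.pos (fun i => x (σ i)) n ω ∈ A}).toReal

end Walk

open scoped Classical in
/-- `ψ(y) = (y_j - y_i)(e_j - e_i)` for the alphabetically minimal pair `(i,j)` with `i < j`
and `y_i > y_j` (junk value `0` if no such pair exists). -/
def psi {k : ℕ} (y : Fin k → ℝ) : Fin k → ℝ :=
  let I : Finset (Fin k) := Finset.univ.filter (fun i => ∃ j, i < j ∧ y j < y i)
  if hI : I.Nonempty then
    let i := I.min' hI
    let J : Finset (Fin k) := Finset.univ.filter (fun j => i < j ∧ y j < y i)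
    if hJ : J.Nonempty then
      let j := J.min' hJ
      fun m => (y j - y i) * ((if m = j then 1 else 0) - (if m = i then 1 else 0))
    else 0
  else 0

/-- Data for the local central limit theorem: the state space `S` of the walk and the
`n`-step transition densities `p_n`, in both the lattice and the non-lattice case. -/
structure DensityData {k : ℕ} {Ω : Type} [MeasurableSpace Ω] (w : Walk k Ω) where
  S : Set ℝ
  p : ℕ → ℝ → ℝ
  cases :
    (∃ α : ℝ, 0 < α ∧ S = {y : ℝ | ∃ m : ℤ, y = α * m} ∧
      (∀ i n, ∀ᵐ ω ∂w.P, w.S1 i n ω ∈ S) ∧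
      (∀ i n y, p n y = (w.P {ω | w.S1 i n ω = y}).toReal)) ∨
    (S = Set.univ ∧ ∀ i n, 1 ≤ n →
      Measure.map (w.S1 i n) w.P = MeasureTheory.volume.withDensity fun y => ENNReal.ofReal (p n y))

/-- The rescaled determinant `D_l^{(n)}(x,y) = det[ √n p_l(y_i √n − x_j) ]_{i,j}`. -/
def Dscaled {k : ℕ} (p : ℕ → ℝ → ℝ) (l n : ℕ) (x y : Fin k → ℝ) : ℝ :=
  Matrix.det (Matrix.of fun i j : Fin k => Real.sqrt n * p l (y i * Real.sqrt n - x j))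

/-- `B` is a standard `k`-dimensional Brownian motion started at `x` under `Q`. -/
structure IsBM (k : ℕ) {Ω' : Type} [MeasurableSpace Ω'] (Q : Measure Ω')
    (B : ℝ → Ω' → Fin k → ℝ) (x : Fin k → ℝ) : Prop where
  prob : IsProbabilityMeasure Q
  meas : ∀ t, Measurable (B t)
  cont : ∀ᵐ ω ∂Q, Continuous fun t => B t ω
  start : ∀ᵐ ω ∂Q, B 0 ω = x
  incr : ∀ s t : ℝ, 0 ≤ s → s ≤ t →
    Measure.map (fun ω => B t ω - B s ω) Q
      = Measure.pi fun _ : Fin k => ProbabilityTheory.gaussianReal 0 (Real.toNNReal (t - s))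
  indepIncr : ∀ (n : ℕ) (ts : Fin (n + 1) → ℝ), (∀ j, 0 ≤ ts j) → Monotone ts →
    iIndepFun
      (fun j : Fin n => fun ω => B (ts j.succ) ω - B (ts j.castSucc) ω) Q

/-- The first exit time `T = inf{s ≥ 0 : B(s) ∉ W}` of a continuous-time path from the
Weyl chamber, with value `∞` if there is no exit. -/
def exitTime {k : ℕ} {Ω' : Type} (B : ℝ → Ω' → Fin k → ℝ) (ω : Ω') : ℝ≥0∞ :=
  sInf {s : ℝ≥0∞ | ∃ r : ℝ, 0 ≤ r ∧ s = ENNReal.ofReal r ∧ B r ω ∉ W k}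


section AuxGeneral
variable {Ω : Type} [MeasurableSpace Ω] {P : Measure Ω}

lemma iIndepFun_precomp {ι ι' : Type*} {β : Type*} [mβ : MeasurableSpace β]
    {f : ι → Ω → β} (u : ι' → ι) (hu : Function.Injective u)
    (h : iIndepFun f P) :
    iIndepFun (fun j => f (u j)) P := by
  classical
  rw [iIndepFun_iff_measure_inter_preimage_eq_mul] at h ⊢
  intro S sets hsets
  have key := h (S.image u)
    (sets := Function.extend u sets fun _ => Set.univ) ?_
  · have h1 : (⋂ i ∈ S.image u, f i ⁻¹' Function.extend u sets (fun _ => Set.univ) i)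
        = ⋂ j ∈ S, f (u j) ⁻¹' sets j := by
      rw [Finset.set_biInter_finset_image]
      refine Set.iInter₂_congr fun j _ => ?_
      rw [hu.extend_apply]
    have h2 : (∏ i ∈ S.image u, P (f i ⁻¹' Function.extend u sets (fun _ => Set.univ) i))
        = ∏ j ∈ S, P (f (u j) ⁻¹' sets j) := by
      rw [Finset.prod_image (fun a _ b _ hab => hu hab)]
      refine Finset.prod_congr rfl fun j _ => ?_
      rw [hu.extend_apply]
    rw [h1, h2] at key
    exact key
  · intro i hi
    rcases Finset.mem_image.mp hi with ⟨j, hj, rfl⟩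
    rw [hu.extend_apply]
    exact hsets j hj

/-- Product of independent integrable random variables is integrable, with
product integral. -/
lemma iIndepFun_prod_integral {ι : Type*} [IsProbabilityMeasure P]
    (s : Finset ι) (f : ι → Ω → ℝ)
    (hind : iIndepFun f P)
    (hmeas : ∀ i, Measurable (f i)) (hint : ∀ i, Integrable (f i) P) :
    Integrable (fun ω => ∏ i ∈ s, f i ω) P ∧
      (∫ ω, ∏ i ∈ s, f i ω ∂P) = ∏ i ∈ s, ∫ ω, f i ω ∂P := by
  classical
  induction s using Finset.induction_on with
  | empty => simp
  | insert i s hns ih =>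
    have hIF : IndepFun (∏ j ∈ s, f j) (f i) P :=
      hind.indepFun_finsetProd_of_notMem hmeas hns
    have hps : (fun ω => ∏ j ∈ s, f j ω) = ∏ j ∈ s, f j := by
      funext ω; simp [Finset.prod_apply]
    have hInt1 : Integrable (∏ j ∈ s, f j) P := by rw [← hps]; exact ih.1
    have hmul : Integrable ((∏ j ∈ s, f j) * f i) P :=
      hIF.integrable_mul hInt1 (hint i)
    constructor
    · have : (fun ω => ∏ j ∈ insert i s, f j ω) = (∏ j ∈ s, f j) * f i := by
        funext ω; simp [Finset.prod_insert hns, Finset.prod_apply, mul_comm]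
      rw [this]; exact hmul
    · have h1 : (fun ω => ∏ j ∈ insert i s, f j ω) = fun ω => (∏ j ∈ s, f j) ω * f i ω := by
        funext ω; simp [Finset.prod_insert hns, Finset.prod_apply, mul_comm]
      rw [h1]
      have := hIF.integral_mul_eq_mul_integral hInt1.aestronglyMeasurable (hint i).aestronglyMeasurable
      have h2 : (fun ω => (∏ j ∈ s, f j) ω * f i ω) = (∏ j ∈ s, f j) * f i := rfl
      rw [h2, this, Finset.prod_insert hns, ← hps, ih.2, mul_comm]


end AuxGeneral

section AuxVdm

lemma prod_pairs_left {k : ℕ} (f : Fin k × Fin k → ℝ) :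
    ∏ p ∈ Finset.univ.filter (fun p : Fin k × Fin k => p.1 < p.2), f p
      = ∏ i, ∏ j ∈ Finset.Ioi i, f (i, j) := by
  rw [Finset.prod_filter, Fintype.prod_prod_type]
  refine Finset.prod_congr rfl fun i _ => ?_
  rw [← Finset.prod_filter]
  congr 1
  ext j; simp

lemma prod_pairs_right {k : ℕ} (f : Fin k × Fin k → ℝ) :
    ∏ p ∈ Finset.univ.filter (fun p : Fin k × Fin k => p.1 < p.2), f p
      = ∏ j, ∏ i ∈ Finset.Iio j, f (i, j) := by
  rw [Finset.prod_filter, Fintype.prod_prod_type_right]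
  refine Finset.prod_congr rfl fun j _ => ?_
  rw [← Finset.prod_filter]
  congr 1
  ext i; simp

lemma Vdm_eq_det {k : ℕ} (y : Fin k → ℝ) : Vdm y = (Matrix.vandermonde y).det := by
  rw [Matrix.det_vandermonde, Vdm, prod_pairs_left]

lemma Vdm_pos {k : ℕ} {y : Fin k → ℝ} (hy : y ∈ W k) : 0 < Vdm y := by
  refine Finset.prod_pos fun p hp => ?_
  rw [Finset.mem_filter] at hp
  exact sub_pos.mpr (hy hp.2)

lemma Vdm_abs_le {k : ℕ} (y : Fin k → ℝ) :
    |Vdm y| ≤ 2 ^ ((Finset.univ.filter (fun p : Fin k × Fin k => p.1 < p.2)).card)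
      * ∏ i, (max 1 |y i|) ^ (k - 1) := by
  classical
  set m : Fin k → ℝ := fun i => max 1 |y i| with hm
  have hm1 : ∀ i, 1 ≤ m i := fun i => le_max_left _ _
  have hm0 : ∀ i, 0 ≤ m i := fun i => le_trans zero_le_one (hm1 i)
  have habs : ∀ i, |y i| ≤ m i := fun i => le_max_right _ _
  have step1 : |Vdm y| ≤ ∏ p ∈ Finset.univ.filter (fun p : Fin k × Fin k => p.1 < p.2),
      (2 * (m p.1 * m p.2)) := by
    rw [Vdm, Finset.abs_prod]
    refine Finset.prod_le_prod (fun p _ => abs_nonneg _) fun p _ => ?_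
    calc |y p.2 - y p.1| ≤ |y p.2| + |y p.1| := abs_sub _ _
      _ ≤ m p.2 + m p.1 := add_le_add (habs _) (habs _)
      _ ≤ m p.1 * m p.2 + m p.1 * m p.2 :=
          add_le_add (le_mul_of_one_le_left (hm0 _) (hm1 _))
            (le_mul_of_one_le_right (hm0 _) (hm1 _))
      _ = 2 * (m p.1 * m p.2) := by ring
  have step2 : ∏ p ∈ Finset.univ.filter (fun p : Fin k × Fin k => p.1 < p.2),
      (2 * (m p.1 * m p.2))
      = 2 ^ ((Finset.univ.filter (fun p : Fin k × Fin k => p.1 < p.2)).card)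
        * ((∏ p ∈ Finset.univ.filter (fun p : Fin k × Fin k => p.1 < p.2), m p.1)
          * (∏ p ∈ Finset.univ.filter (fun p : Fin k × Fin k => p.1 < p.2), m p.2)) := by
    rw [Finset.prod_mul_distrib, Finset.prod_const, Finset.prod_mul_distrib]
  have step3 : (∏ p ∈ Finset.univ.filter (fun p : Fin k × Fin k => p.1 < p.2), m p.1)
      * (∏ p ∈ Finset.univ.filter (fun p : Fin k × Fin k => p.1 < p.2), m p.2)
      = ∏ i, m i ^ (k - 1) := by
    rw [prod_pairs_left (fun p => m p.1), prod_pairs_right (fun p => m p.2),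
      ← Finset.prod_mul_distrib]
    refine Finset.prod_congr rfl fun i _ => ?_
    simp only []
    rw [Finset.prod_const, Finset.prod_const, Fin.card_Ioi, Fin.card_Iio, ← pow_add]
    congr 1
    have := i.isLt
    omega
  calc |Vdm y| ≤ _ := step1
    _ = _ := by rw [step2, step3]


lemma one_add_sum_le_prod {α : Type*} (s : Finset α) (f : α → ℝ)
    (hf : ∀ a ∈ s, 0 ≤ f a) : 1 + ∑ a ∈ s, f a ≤ ∏ a ∈ s, (1 + f a) := by
  classical
  induction s using Finset.induction_on with
  | empty => simp
  | insert i s hns ih =>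
    rw [Finset.sum_insert hns, Finset.prod_insert hns]
    have h1 : ∀ a ∈ s, 0 ≤ f a := fun a ha => hf a (Finset.mem_insert_of_mem ha)
    have ih' := ih h1
    have hfi : 0 ≤ f i := hf i (Finset.mem_insert_self _ _)
    have hs : 0 ≤ ∑ a ∈ s, f a := Finset.sum_nonneg h1
    nlinarith

end AuxVdm

namespace Walk
section AuxWalk

variable {k : ℕ} {Ω : Type} [MeasurableSpace Ω] (w : Walk k Ω)

lemma measurableSet_W : MeasurableSet (W k) := by
  have h : W k = ⋂ (i : Fin k), ⋂ (j : Fin k), ⋂ (_ : i < j), {y : Fin k → ℝ | y i < y j} := by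
    ext y
    simp only [W, Set.mem_setOf_eq, Set.mem_iInter]
    exact ⟨fun h i j hij => h hij, fun h i j hij => h i j hij⟩
  rw [h]
  exact MeasurableSet.iInter fun i => MeasurableSet.iInter fun j =>
    MeasurableSet.iInter fun _ =>
      measurableSet_lt (measurable_pi_apply i) (measurable_pi_apply j)

lemma measurable_Vdm : Measurable (Vdm : (Fin k → ℝ) → ℝ) :=
  Finset.measurable_prod _ fun p _ =>
    (measurable_pi_apply p.2).sub (measurable_pi_apply p.1)

lemma measurable_pos (x : Fin k → ℝ) (n : ℕ) : Measurable (w.pos x n) :=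
  measurable_pi_lambda _ fun i =>
    measurable_const.add (Finset.measurable_sum _ fun l _ => w.meas l i)

lemma integrable_abs_pow (hk : 2 ≤ k) (hm : w.HasMoment ((k : ℝ) - 1))
    (l : ℕ) (i : Fin k) {r : ℕ} (hr : r ≤ k - 1) :
    Integrable (fun ω => |w.ξ l i ω| ^ r) w.P := by
  haveI := w.prob
  refine Integrable.mono' ((integrable_const 1).add (hm l i))
    ((w.meas l i).abs.pow_const r).aestronglyMeasurable (Filter.Eventually.of_forall fun ω => ?_)
  set a := |w.ξ l i ω| with ha
  have ha0 : 0 ≤ a := abs_nonneg _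
  have hrw : ‖a ^ r‖ = a ^ r := by
    rw [Real.norm_eq_abs, abs_pow, abs_of_nonneg ha0]
  rw [hrw]
  have hgoal : ((fun _ : Ω => (1:ℝ)) + fun ω => |w.ξ l i ω| ^ ((k:ℝ) - 1)) ω
      = 1 + a ^ ((k:ℝ) - 1) := rfl
  rw [hgoal]
  rcases le_total a 1 with h1 | h1
  · have : a ^ r ≤ 1 := pow_le_one₀ ha0 h1
    have h2 : (0:ℝ) ≤ a ^ ((k:ℝ) - 1) := Real.rpow_nonneg ha0 _
    linarith
  · have h2 : a ^ r = a ^ ((r : ℕ) : ℝ) := (Real.rpow_natCast a r).symm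
    have h3 : a ^ ((r : ℕ) : ℝ) ≤ a ^ ((k:ℝ) - 1) := by
      apply Real.rpow_le_rpow_of_exponent_le h1
      have : ((r : ℝ)) ≤ ((k - 1 : ℕ) : ℝ) := Nat.cast_le.mpr hr
      rwa [Nat.cast_sub (by omega), Nat.cast_one] at this
    rw [h2]
    linarith

lemma integrable_pow (hk : 2 ≤ k) (hm : w.HasMoment ((k : ℝ) - 1))
    (l : ℕ) (i : Fin k) {r : ℕ} (hr : r ≤ k - 1) :
    Integrable (fun ω => (w.ξ l i ω) ^ r) w.P := by
  refine Integrable.mono' (w.integrable_abs_pow hk hm l i hr)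
    ((w.meas l i).pow_const r).aestronglyMeasurable (Filter.Eventually.of_forall fun ω => ?_)
  rw [Real.norm_eq_abs, abs_pow]

/-- `r`-th moment of a single step. -/
def muW (r : ℕ) : ℝ :=
  if h : 0 < k then ∫ ω, (w.ξ 0 ⟨0, h⟩ ω) ^ r ∂w.P else 0

lemma integral_xi_pow (hk : 0 < k) (l : ℕ) (i : Fin k) (r : ℕ) :
    ∫ ω, (w.ξ l i ω) ^ r ∂w.P = w.muW r := by
  rw [Walk.muW, dif_pos hk]
  exact ((w.ident l i 0 ⟨0, hk⟩).comp (measurable_id.pow_const r)).integral_eq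

lemma muW_zero (hk : 0 < k) : w.muW 0 = 1 := by
  haveI := w.prob
  simp [Walk.muW, dif_pos hk]

/-- The monic polynomial `Q_e(a) = E (a + ξ)^e`. -/
def QW (e : ℕ) : Polynomial ℝ :=
  ∑ m ∈ Finset.range (e + 1),
    Polynomial.C (w.muW (e - m) * (e.choose m : ℝ)) * Polynomial.X ^ m

lemma integrable_add_pow (hk : 2 ≤ k) (hm : w.HasMoment ((k : ℝ) - 1))
    (l : ℕ) (i : Fin k) (a : ℝ) {e : ℕ} (he : e ≤ k - 1) :
    Integrable (fun ω => (a + w.ξ l i ω) ^ e) w.P := by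
  have hrw : (fun ω => (a + w.ξ l i ω) ^ e)
      = fun ω => ∑ m ∈ Finset.range (e + 1),
          a ^ m * (w.ξ l i ω) ^ (e - m) * (e.choose m : ℝ) := by
    funext ω; exact add_pow a _ e
  rw [hrw]
  exact integrable_finset_sum _ fun m _ =>
    (((w.integrable_pow hk hm l i (le_trans (Nat.sub_le _ _) he)).const_mul
      (a ^ m)).mul_const _)

lemma integral_add_pow (hk : 2 ≤ k) (hm : w.HasMoment ((k : ℝ) - 1))
    (l : ℕ) (i : Fin k) (a : ℝ) {e : ℕ} (he : e ≤ k - 1) :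
    ∫ ω, (a + w.ξ l i ω) ^ e ∂w.P = (w.QW e).eval a := by
  have hrw : (fun ω => (a + w.ξ l i ω) ^ e)
      = fun ω => ∑ m ∈ Finset.range (e + 1),
          a ^ m * (w.ξ l i ω) ^ (e - m) * (e.choose m : ℝ) := by
    funext ω; exact add_pow a _ e
  rw [hrw, integral_finset_sum _ (fun m _ =>
    ((w.integrable_pow hk hm l i (le_trans (Nat.sub_le _ _) he)).const_mul
      (a ^ m)).mul_const _)]
  rw [Walk.QW, Polynomial.eval_finset_sum]
  refine Finset.sum_congr rfl fun m _ => ?_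
  have h1 : ∫ ω, a ^ m * w.ξ l i ω ^ (e - m) * (e.choose m : ℝ) ∂w.P
      = (a ^ m * (e.choose m : ℝ)) * ∫ ω, w.ξ l i ω ^ (e - m) ∂w.P := by
    rw [← integral_const_mul]
    congr 1; funext ω; ring
  rw [h1, w.integral_xi_pow (by omega) l i]
  simp only [Polynomial.eval_mul, Polynomial.eval_C, Polynomial.eval_pow, Polynomial.eval_X]
  ring

lemma QW_coeff (e s : ℕ) :
    (w.QW e).coeff s = if s ≤ e then w.muW (e - s) * (e.choose s : ℝ) else 0 := by
  classical
  rw [Walk.QW, Polynomial.finset_sum_coeff]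
  simp only [Polynomial.coeff_C_mul, Polynomial.coeff_X_pow]
  rw [Finset.sum_eq_single s]
  · by_cases h : s ≤ e
    · simp [h, Finset.mem_range]
    · rw [if_pos rfl, if_neg h, mul_one, Nat.choose_eq_zero_of_lt (by omega)]
      simp
  · intro m _ hms
    simp [Ne.symm hms]
  · intro hs
    rw [Finset.mem_range, not_lt] at hs
    rw [if_pos rfl, mul_one, Nat.choose_eq_zero_of_lt (by omega)]
    simp

lemma QW_natDegree_le (e : ℕ) : (w.QW e).natDegree ≤ e := by
  refine Polynomial.natDegree_sum_le_of_forall_le _ _ fun m hm => ?_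
  refine le_trans (Polynomial.natDegree_C_mul_le _ _) ?_
  rw [Polynomial.natDegree_X_pow]
  exact Nat.lt_succ_iff.mp (Finset.mem_range.mp hm)

lemma QW_coeff_self (hk : 0 < k) (e : ℕ) : (w.QW e).coeff e = 1 := by
  rw [w.QW_coeff]
  simp [w.muW_zero hk]

lemma QW_monic (hk : 0 < k) (e : ℕ) : (w.QW e).Monic :=
  Polynomial.monic_of_natDegree_le_of_coeff_eq_one e (w.QW_natDegree_le e) (w.QW_coeff_self hk e)

lemma QW_natDegree (hk : 0 < k) (e : ℕ) : (w.QW e).natDegree = e :=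
  le_antisymm (w.QW_natDegree_le e) (Polynomial.le_natDegree_of_ne_zero (by
    rw [w.QW_coeff_self hk]; exact one_ne_zero))

lemma xi_row_iIndep (m : ℕ) :
    iIndepFun
      (fun j : Fin k => w.ξ m j) w.P :=
  iIndepFun_precomp (fun j : Fin k => ((m, j) : ℕ × Fin k))
    (fun a b hab => by injection hab with h1 h2) w.indep

/-- Harmonicity of the Vandermonde determinant: `E Δ(c + ξ(m)) = Δ(c)`. -/
lemma harmonic (hk : 2 ≤ k) (hm : w.HasMoment ((k : ℝ) - 1)) (m : ℕ) (c : Fin k → ℝ) :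
    ∫ ω, Vdm (fun i => c i + w.ξ m i ω) ∂w.P = Vdm c := by
  classical
  haveI := w.prob
  set F : Equiv.Perm (Fin k) → Fin k → Ω → ℝ :=
    fun σ j ω => (c j + w.ξ m j ω) ^ (((σ⁻¹ : Equiv.Perm (Fin k)) j : Fin k) : ℕ) with hF
  have hFmeas : ∀ σ j, Measurable (F σ j) := fun σ j =>
    (measurable_const.add (w.meas m j)).pow_const _
  have hFint : ∀ σ j, Integrable (F σ j) w.P := fun σ j =>
    w.integrable_add_pow hk hm m j (c j) (by
      have := (((σ⁻¹ : Equiv.Perm (Fin k)) j : Fin k)).isLt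
      omega)
  have hFind : ∀ σ, iIndepFun
      (F σ) w.P := fun σ =>
    (w.xi_row_iIndep m).comp
      (fun j t => (c j + t) ^ (((σ⁻¹ : Equiv.Perm (Fin k)) j : Fin k) : ℕ))
      (fun j => (measurable_const.add measurable_id).pow_const _)
  have hFprod := fun σ => iIndepFun_prod_integral (Finset.univ) (F σ) (hFind σ)
    (hFmeas σ) (hFint σ)
  have hrw : (fun ω => Vdm (fun i => c i + w.ξ m i ω))
      = fun ω => ∑ σ : Equiv.Perm (Fin k),
          ((Equiv.Perm.sign σ : ℤ) : ℝ) * ∏ j, F σ j ω := by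
    funext ω
    rw [Vdm_eq_det, Matrix.det_apply']
    refine Finset.sum_congr rfl fun σ _ => ?_
    congr 1
    rw [← Equiv.prod_comp σ (fun j => F σ j ω)]
    refine Finset.prod_congr rfl fun i _ => ?_
    simp [hF, Matrix.vandermonde_apply, Equiv.Perm.inv_def, Equiv.symm_apply_apply]
  rw [hrw, integral_finset_sum _ (fun σ _ => ((hFprod σ).1.const_mul _)),
    Vdm_eq_det,
    Matrix.det_eval_matrixOfPolynomials_eq_det_vandermonde c (fun j => w.QW (j : ℕ))
      (fun j => w.QW_natDegree (by omega) _) (fun j => w.QW_monic (by omega) _)]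
  rw [← Matrix.det_transpose, Matrix.det_apply']
  have key : ∀ σ : Equiv.Perm (Fin k),
      ∫ ω, ((Equiv.Perm.sign σ : ℤ) : ℝ) * ∏ j, F σ j ω ∂w.P
        = ((Equiv.Perm.sign σ : ℤ) : ℝ)
          * ∏ j, (w.QW (((σ⁻¹ : Equiv.Perm (Fin k)) j : Fin k) : ℕ)).eval (c j) := by
    intro σ
    rw [integral_const_mul, (hFprod σ).2]
    congr 1
    refine Finset.prod_congr rfl fun j _ => ?_
    exact w.integral_add_pow hk hm m j (c j) (by
      have := (((σ⁻¹ : Equiv.Perm (Fin k)) j : Fin k)).isLt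
      omega)
  rw [Finset.sum_congr rfl fun σ _ => key σ]
  rw [Fintype.sum_equiv (Equiv.inv (Equiv.Perm (Fin k)))
    (fun σ => ((Equiv.Perm.sign σ : ℤ) : ℝ)
      * ∏ j, (w.QW (((σ⁻¹ : Equiv.Perm (Fin k)) j : Fin k) : ℕ)).eval (c j))
    (fun σ => ((Equiv.Perm.sign σ : ℤ) : ℝ)
      * ∏ j, (w.QW ((σ j : Fin k) : ℕ)).eval (c j))
    (fun σ => by simp [Equiv.inv_apply, Equiv.Perm.sign_inv])]
  refine Finset.sum_congr rfl fun σ _ => ?_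
  congr 1

/-- The event that the walk stays in `W` up to time `t`. -/
def Agt (x : Fin k → ℝ) (t : ℕ) : Set Ω := {ω | ∀ s ≤ t, w.pos x s ω ∈ W k}

/-- The event that the walk exits `W` exactly at time `l`. -/
def Ceq (x : Fin k → ℝ) (l : ℕ) : Set Ω :=
  {ω | w.pos x l ω ∉ W k ∧ ∀ s < l, w.pos x s ω ∈ W k}

lemma measurableSet_Agt (x : Fin k → ℝ) (t : ℕ) : MeasurableSet (w.Agt x t) := by
  have : w.Agt x t = ⋂ (s : ℕ), ⋂ (_ : s ≤ t), (w.pos x s) ⁻¹' (W k) := by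
    ext ω; simp [Walk.Agt, Set.mem_iInter]
  rw [this]
  exact MeasurableSet.iInter fun s => MeasurableSet.iInter fun _ =>
    (w.measurable_pos x s) measurableSet_W

lemma measurableSet_Ceq (x : Fin k → ℝ) (l : ℕ) : MeasurableSet (w.Ceq x l) := by
  have : w.Ceq x l = ((w.pos x l) ⁻¹' (W k))ᶜ ∩
      ⋂ (s : ℕ), ⋂ (_ : s < l), (w.pos x s) ⁻¹' (W k) := by
    ext ω; simp [Walk.Ceq, Set.mem_iInter]
  rw [this]
  exact (((w.measurable_pos x l) measurableSet_W).compl).inter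
    (MeasurableSet.iInter fun s => MeasurableSet.iInter fun _ =>
      (w.measurable_pos x s) measurableSet_W)

lemma tau_spec_exists (x : Fin k → ℝ) (ω : Ω) (h : ∃ t, w.pos x t ω ∉ W k) :
    ∃ l : ℕ, w.tau x ω = (l : ℕ∞) ∧ ω ∈ w.Ceq x l := by
  set S := {t : ℕ | w.pos x t ω ∉ W k} with hS
  have hSne : S.Nonempty := h
  have hmem := Nat.sInf_mem hSne
  refine ⟨sInf S, ?_, hmem, fun s hs => ?_⟩
  · apply le_antisymm
    · exact sInf_le ⟨sInf S, hmem, rfl⟩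
    · apply le_sInf
      rintro b ⟨u, hu, rfl⟩
      exact Nat.cast_le.mpr (Nat.sInf_le hu)
  · by_contra hbad
    exact absurd (Nat.sInf_le (hbad : s ∈ S)) (not_le.mpr hs)

lemma tau_eq_top (x : Fin k → ℝ) (ω : Ω) (h : ∀ t, w.pos x t ω ∈ W k) :
    w.tau x ω = ⊤ := by
  rw [Walk.tau]
  have he : {t : ℕ | w.pos x t ω ∉ W k} = ∅ := by
    ext t; simp [h t]
  rw [he]
  simp

lemma mem_Ceq_of_tau (x : Fin k → ℝ) (ω : Ω) (m : ℕ) (h : w.tau x ω = (m : ℕ∞)) :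
    ω ∈ w.Ceq x m := by
  by_cases hS : ∃ t, w.pos x t ω ∉ W k
  · obtain ⟨l, hl, hC⟩ := w.tau_spec_exists x ω hS
    have : l = m := by
      rw [hl] at h
      exact_mod_cast h
    rwa [this] at hC
  · push_neg at hS
    rw [w.tau_eq_top x ω hS] at h
    simp at h

lemma tau_of_mem_Ceq (x : Fin k → ℝ) (ω : Ω) (l : ℕ) (h : ω ∈ w.Ceq x l) :
    w.tau x ω = (l : ℕ∞) := by
  obtain ⟨l', hl', hC⟩ := w.tau_spec_exists x ω ⟨l, h.1⟩
  have : l' = l := by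
    rcases lt_trichotomy l' l with hlt | heq | hgt
    · exact absurd (h.2 l' hlt) hC.1
    · exact heq
    · exact absurd (hC.2 l hgt) h.1
  rwa [this] at hl'

lemma Ceq_disjoint (x : Fin k → ℝ) {l l' : ℕ} (h : l ≠ l') :
    Disjoint (w.Ceq x l) (w.Ceq x l') := by
  rw [Set.disjoint_left]
  intro ω h1 h2
  have e1 := w.tau_of_mem_Ceq x ω l h1
  have e2 := w.tau_of_mem_Ceq x ω l' h2
  rw [e1] at e2
  exact h (by exact_mod_cast e2)

lemma tauGT_eq (x : Fin k → ℝ) (n : ℕ) : w.tauGT x (n : ℝ) = w.Agt x n := by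
  ext ω
  constructor
  · intro h s hs
    by_contra hbad
    obtain ⟨l, hl, hC⟩ := w.tau_spec_exists x ω ⟨s, hbad⟩
    have hcast := h l hl
    rcases le_or_gt l s with hls | hsl
    · have h1 : (l : ℝ) ≤ (n : ℝ) := by
        exact_mod_cast le_trans hls hs
      linarith
    · exact hbad (hC.2 s hsl)
  · intro h m hm
    have hC := w.mem_Ceq_of_tau x ω m hm
    by_contra hnm
    push_neg at hnm
    have hmn : m ≤ n := by exact_mod_cast hnm
    exact hC.1 (h m hmn)

lemma tauLE_eq (x : Fin k → ℝ) (n : ℕ) :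
    w.tauLE x (n : ℝ) = ⋃ l ∈ Finset.range (n + 1), w.Ceq x l := by
  ext ω
  simp only [Walk.tauLE, Set.mem_setOf_eq, Set.mem_iUnion, Finset.mem_range]
  constructor
  · rintro ⟨m, hm, hle⟩
    exact ⟨m, by exact_mod_cast Nat.lt_succ_iff.mpr (by exact_mod_cast hle),
      w.mem_Ceq_of_tau x ω m hm⟩
  · rintro ⟨l, hl, hC⟩
    exact ⟨l, w.tau_of_mem_Ceq x ω l hC, by exact_mod_cast Nat.lt_succ_iff.mp hl⟩

lemma stopped_of_mem_Ceq (x : Fin k → ℝ) (ω : Ω) (l : ℕ) (h : ω ∈ w.Ceq x l) :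
    w.stopped x ω = w.pos x l ω := by
  rw [Walk.stopped, w.tau_of_mem_Ceq x ω l h]
  simp

lemma integrable_Vdm_pos (hk : 2 ≤ k) (hm : w.HasMoment ((k : ℝ) - 1))
    (x : Fin k → ℝ) (t : ℕ) :
    Integrable (fun ω => Vdm (w.pos x t ω)) w.P := by
  classical
  haveI := w.prob
  set h : ℕ × Fin k → Ω → ℝ := fun p ω => (1 + |w.ξ p.1 p.2 ω|) ^ (k - 1) with hh
  have hmeas : ∀ p, Measurable (h p) := fun p =>
    (measurable_const.add (w.meas p.1 p.2).abs).pow_const _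
  have hind : iIndepFun h w.P :=
    w.indep.comp (fun p u => (1 + |u|) ^ (k - 1))
      (fun p => (measurable_const.add measurable_abs).pow_const _)
  have hint : ∀ p, Integrable (h p) w.P := by
    intro p
    have hrw : h p = fun ω => ∑ m ∈ Finset.range (k - 1 + 1),
        1 ^ m * |w.ξ p.1 p.2 ω| ^ (k - 1 - m) * ((k-1).choose m : ℝ) := by
      funext ω; exact add_pow 1 _ (k-1)
    rw [hrw]
    exact integrable_finset_sum _ fun m _ =>
      ((w.integrable_abs_pow hk hm p.1 p.2 (Nat.sub_le _ _)).const_mul _).mul_const _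
  have hprod := iIndepFun_prod_integral ((Finset.range t) ×ˢ Finset.univ) h hind hmeas hint
  set K := (Finset.univ.filter (fun p : Fin k × Fin k => p.1 < p.2)).card with hK
  set C : ℝ := 2 ^ K * ∏ i, (1 + |x i|) ^ (k - 1) with hC
  refine Integrable.mono' (hprod.1.const_mul C)
    ((measurable_Vdm.comp (w.measurable_pos x t)).aestronglyMeasurable)
    (Filter.Eventually.of_forall fun ω => ?_)
  rw [Real.norm_eq_abs]
  have key : ∀ i : Fin k, max 1 |w.pos x t ω i|
      ≤ (1 + |x i|) * ∏ l ∈ Finset.range t, (1 + |w.ξ l i ω|) := by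
    intro i
    have h1 : |w.pos x t ω i| ≤ |x i| + ∑ l ∈ Finset.range t, |w.ξ l i ω| := by
      refine le_trans (abs_add_le _ _) ?_
      exact (add_le_add_iff_left _).mpr (Finset.abs_sum_le_sum_abs _ _)
    have h2 : (1:ℝ) + ∑ l ∈ Finset.range t, |w.ξ l i ω|
        ≤ ∏ l ∈ Finset.range t, (1 + |w.ξ l i ω|) :=
      one_add_sum_le_prod _ _ (fun l _ => abs_nonneg _)
    have h3 : max 1 |w.pos x t ω i| ≤ 1 + |x i| + ∑ l ∈ Finset.range t, |w.ξ l i ω| := by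
      have hnn1 := abs_nonneg (x i)
      have h4 : (0:ℝ) ≤ ∑ l ∈ Finset.range t, |w.ξ l i ω| :=
        Finset.sum_nonneg fun l _ => abs_nonneg _
      rcases max_cases 1 |w.pos x t ω i| with ⟨he, _⟩ | ⟨he, _⟩ <;> rw [he] <;> linarith
    calc max 1 |w.pos x t ω i| ≤ 1 + |x i| + ∑ l ∈ Finset.range t, |w.ξ l i ω| := h3
      _ ≤ (1 + |x i|) * (1 + ∑ l ∈ Finset.range t, |w.ξ l i ω|) := by
          have h5 : (0:ℝ) ≤ |x i| := abs_nonneg _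
          have h6 : (0:ℝ) ≤ ∑ l ∈ Finset.range t, |w.ξ l i ω| :=
            Finset.sum_nonneg fun l _ => abs_nonneg _
          nlinarith
      _ ≤ (1 + |x i|) * ∏ l ∈ Finset.range t, (1 + |w.ξ l i ω|) := by
          have h5 : (0:ℝ) ≤ 1 + |x i| := by positivity
          exact mul_le_mul_of_nonneg_left h2 h5
  calc |Vdm (w.pos x t ω)| ≤ 2 ^ K * ∏ i, (max 1 |w.pos x t ω i|) ^ (k - 1) :=
        Vdm_abs_le _
    _ ≤ 2 ^ K * ∏ i, ((1 + |x i|) * ∏ l ∈ Finset.range t, (1 + |w.ξ l i ω|)) ^ (k-1) := by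
        refine mul_le_mul_of_nonneg_left ?_ (by positivity)
        refine Finset.prod_le_prod
          (fun i _ => pow_nonneg (le_trans zero_le_one (le_max_left _ _)) _) (fun i _ => ?_)
        exact pow_le_pow_left₀ (le_trans zero_le_one (le_max_left _ _)) (key i) _
    _ = C * ∏ p ∈ (Finset.range t) ×ˢ Finset.univ, h p ω := by
        rw [hC]
        rw [Finset.prod_product_right]
        simp only [hh, mul_pow, Finset.prod_mul_distrib, ← Finset.prod_pow]
        ring

lemma pos_zero (x : Fin k → ℝ) (ω : Ω) : w.pos x 0 ω = x := by
  funext i; simp [Walk.pos]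

lemma step_integral (hk : 2 ≤ k) (hm : w.HasMoment ((k : ℝ) - 1))
    (x : Fin k → ℝ) (m : ℕ) :
    ∫ ω in w.Agt x m, Vdm (w.pos x (m + 1) ω) ∂w.P
      = ∫ ω in w.Agt x m, Vdm (w.pos x m ω) ∂w.P := by
  classical
  haveI := w.prob
  set Y : Ω → (Fin m × Fin k → ℝ) := fun ω p => w.ξ p.1 p.2 ω with hY
  set Z : Ω → (Fin k → ℝ) := fun ω i => w.ξ m i ω with hZ
  have hYmeas : Measurable Y := measurable_pi_lambda _ fun p => w.meas p.1 p.2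
  have hZmeas : Measurable Z := measurable_pi_lambda _ fun i => w.meas m i
  set gs : ℕ → (Fin m × Fin k → ℝ) → (Fin k → ℝ) :=
    fun s u i => x i + ∑ l : Fin m, if (l : ℕ) < s then u (l, i) else 0 with hgs
  have hgmeas : ∀ s, Measurable (gs s) := by
    intro s
    refine measurable_pi_lambda _ fun i => measurable_const.add ?_
    refine Finset.measurable_sum _ fun l _ => ?_
    by_cases hl : (l : ℕ) < s
    · simpa [hl] using measurable_pi_apply (l, i)
    · simpa [hl] using @measurable_const ℝ _ _ _ 0
  set G : Set (Fin m × Fin k → ℝ) :=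
    ⋂ s ∈ Finset.range (m + 1), (gs s) ⁻¹' (W k) with hG
  have hGmeas : MeasurableSet G :=
    MeasurableSet.biInter (Finset.range (m+1)).countable_toSet
      (fun s _ => (hgmeas s) measurableSet_W)
  have hsum : ∀ (ω : Ω) (i : Fin k) (s : ℕ), s ≤ m →
      ∑ l : Fin m, (if (l : ℕ) < s then Y ω (l, i) else 0)
        = ∑ l ∈ Finset.range s, w.ξ l i ω := by
    intro ω i s hs
    rw [Fin.sum_univ_eq_sum_range (fun l => if l < s then w.ξ l i ω else 0) m,
      ← Finset.sum_filter]
    congr 1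
    ext l
    simp only [Finset.mem_filter, Finset.mem_range]
    omega
  have hpos_eq : ∀ (ω : Ω) (s : ℕ), s ≤ m → w.pos x s ω = gs s (Y ω) := by
    intro ω s hs
    funext i
    simp only [Walk.pos, hgs]
    rw [hsum ω i s hs]
  have hAgt : w.Agt x m = Y ⁻¹' G := by
    ext ω
    simp only [Walk.Agt, Set.mem_setOf_eq, hG, Set.mem_preimage, Set.mem_iInter,
      Finset.mem_range, Nat.lt_succ_iff]
    constructor
    · intro h s hs
      rw [← hpos_eq ω s hs]; exact h s hs
    · intro h s hs
      rw [hpos_eq ω s hs]; exact h s hs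
  have hpos_succ : ∀ ω : Ω, w.pos x (m + 1) ω = fun i => gs m (Y ω) i + Z ω i := by
    intro ω
    funext i
    simp only [Walk.pos, hgs, hZ]
    rw [Finset.sum_range_succ, ← hsum ω i m le_rfl]
    ring
  have hIndep : IndepFun Y Z w.P := by
    have hST : Disjoint ((Finset.range m) ×ˢ (Finset.univ : Finset (Fin k)))
        ({m} ×ˢ (Finset.univ : Finset (Fin k))) := by
      rw [Finset.disjoint_left]
      rintro ⟨l, i⟩ hl hr
      simp only [Finset.mem_product, Finset.mem_range, Finset.mem_singleton] at hl hr
      omega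
    have h0 := w.indep.indepFun_finset _ _ hST (fun p => w.meas p.1 p.2)
    have hYc : Y = (fun v : ((p : ((Finset.range m) ×ˢ (Finset.univ : Finset (Fin k)) : Finset (ℕ × Fin k))) → ℝ) =>
        (fun p : Fin m × Fin k => v ⟨((p.1 : ℕ), p.2), by
          simp [Finset.mem_product, p.1.isLt]⟩)) ∘
        (fun ω (p : ((Finset.range m) ×ˢ (Finset.univ : Finset (Fin k)) : Finset (ℕ × Fin k))) => w.ξ (p : ℕ × Fin k).1 (p : ℕ × Fin k).2 ω) := by
      funext ω; rfl
    have hZc : Z = (fun v : ((p : (({m} ×ˢ (Finset.univ : Finset (Fin k))) : Finset (ℕ × Fin k))) → ℝ) =>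
        (fun i : Fin k => v ⟨(m, i), by simp [Finset.mem_product]⟩)) ∘
        (fun ω (p : (({m} ×ˢ (Finset.univ : Finset (Fin k))) : Finset (ℕ × Fin k))) => w.ξ (p : ℕ × Fin k).1 (p : ℕ × Fin k).2 ω) := by
      funext ω; rfl
    rw [hYc, hZc]
    exact h0.comp
      (measurable_pi_lambda _ fun p => measurable_pi_apply _)
      (measurable_pi_lambda _ fun i => measurable_pi_apply _)
  haveI : IsProbabilityMeasure (Measure.map Y w.P) :=
    Measure.isProbabilityMeasure_map hYmeas.aemeasurable
  haveI : IsProbabilityMeasure (Measure.map Z w.P) :=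
    Measure.isProbabilityMeasure_map hZmeas.aemeasurable
  have hmap : Measure.map (fun ω => (Y ω, Z ω)) w.P
      = (Measure.map Y w.P).prod (Measure.map Z w.P) :=
    (indepFun_iff_map_prod_eq_prod_map_map hYmeas.aemeasurable hZmeas.aemeasurable).mp hIndep
  set φ : ((Fin m × Fin k → ℝ) × (Fin k → ℝ)) → ℝ :=
    fun q => if q.1 ∈ G then Vdm (fun i => gs m q.1 i + q.2 i) else 0 with hφ
  have hφmeas : Measurable φ := by
    refine Measurable.ite (measurable_fst hGmeas) ?_ measurable_const
    exact measurable_Vdm.comp (measurable_pi_lambda _ fun i =>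
      ((measurable_pi_apply i).comp ((hgmeas m).comp measurable_fst)).add
        ((measurable_pi_apply i).comp measurable_snd))
  have hcomp : (fun ω => φ (Y ω, Z ω))
      = Set.indicator (w.Agt x m) (fun ω => Vdm (w.pos x (m + 1) ω)) := by
    funext ω
    rw [Set.indicator_apply, hAgt]
    simp only [Set.mem_preimage]
    by_cases hω : Y ω ∈ G
    · rw [if_pos hω, hφ]
      simp only [if_pos hω]
      rw [hpos_succ ω]
    · rw [if_neg hω, hφ]
      simp only [if_neg hω]
  have hint : Integrable (fun ω => φ (Y ω, Z ω)) w.P := by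
    rw [hcomp]
    exact (w.integrable_Vdm_pos hk hm x (m + 1)).indicator (w.measurableSet_Agt x m)
  have hintmap : Integrable φ ((Measure.map Y w.P).prod (Measure.map Z w.P)) := by
    rw [← hmap]
    exact (integrable_map_measure hφmeas.aestronglyMeasurable
      (hYmeas.prodMk hZmeas).aemeasurable).mpr hint
  have lhs_eq : ∫ ω in w.Agt x m, Vdm (w.pos x (m + 1) ω) ∂w.P
      = ∫ ω, φ (Y ω, Z ω) ∂w.P := by
    rw [hcomp, integral_indicator (w.measurableSet_Agt x m)]
  have hfub : ∫ ω, φ (Y ω, Z ω) ∂w.P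
      = ∫ y, ∫ z, φ (y, z) ∂(Measure.map Z w.P) ∂(Measure.map Y w.P) := by
    rw [← integral_prod φ hintmap, ← hmap,
      integral_map (hYmeas.prodMk hZmeas).aemeasurable hφmeas.aestronglyMeasurable]
  have hinner : ∀ y, ∫ z, φ (y, z) ∂(Measure.map Z w.P)
      = if y ∈ G then Vdm (gs m y) else 0 := by
    intro y
    by_cases hy : y ∈ G
    · rw [if_pos hy]
      have h1 : ∀ z, φ (y, z) = Vdm (fun i => gs m y i + z i) := by
        intro z; rw [hφ]; simp only [if_pos hy]
      calc ∫ z, φ (y, z) ∂(Measure.map Z w.P)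
          = ∫ z, Vdm (fun i => gs m y i + z i) ∂(Measure.map Z w.P) := by
            simp_rw [h1]
        _ = ∫ ω, Vdm (fun i => gs m y i + Z ω i) ∂w.P := by
            rw [integral_map hZmeas.aemeasurable]
            exact (measurable_Vdm.comp (measurable_pi_lambda _ fun i =>
              measurable_const.add (measurable_pi_apply i))).aestronglyMeasurable
        _ = Vdm (gs m y) := w.harmonic hk hm m (gs m y)
    · rw [if_neg hy]
      have h1 : ∀ z, φ (y, z) = 0 := by
        intro z; rw [hφ]; simp only [if_neg hy]
      simp_rw [h1]
      exact integral_zero _ _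
  have houter : ∫ y, (if y ∈ G then Vdm (gs m y) else 0) ∂(Measure.map Y w.P)
      = ∫ ω in w.Agt x m, Vdm (w.pos x m ω) ∂w.P := by
    have hmeas2 : Measurable (fun y => if y ∈ G then Vdm (gs m y) else 0) :=
      Measurable.ite hGmeas (measurable_Vdm.comp (hgmeas m)) measurable_const
    rw [integral_map hYmeas.aemeasurable hmeas2.aestronglyMeasurable]
    rw [← integral_indicator (w.measurableSet_Agt x m)]
    congr 1
    funext ω
    rw [Set.indicator_apply, hAgt]
    simp only [Set.mem_preimage]
    by_cases hω : Y ω ∈ G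
    · rw [if_pos hω, if_pos hω, hpos_eq ω m le_rfl]
    · rw [if_neg hω, if_neg hω]
  rw [lhs_eq, hfub, ← houter]
  congr 1
  funext y
  exact hinner y

lemma Agt_split (x : Fin k → ℝ) (m : ℕ) :
    w.Agt x m = w.Agt x (m + 1) ∪ w.Ceq x (m + 1) := by
  ext ω
  simp only [Walk.Agt, Walk.Ceq, Set.mem_union, Set.mem_setOf_eq]
  constructor
  · intro h
    by_cases hW : w.pos x (m + 1) ω ∈ W k
    · left
      intro s hs
      rcases Nat.lt_succ_iff_lt_or_eq.mp (Nat.lt_succ_of_le hs) with h1 | h1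
      · exact h s (by omega)
      · rw [h1]; exact hW
    · right
      exact ⟨hW, fun s hs => h s (by omega)⟩
  · rintro (h | h)
    · intro s hs; exact h s (by omega)
    · intro s hs; exact h.2 s (by omega)

lemma Agt_Ceq_disjoint (x : Fin k → ℝ) (m : ℕ) :
    Disjoint (w.Agt x (m + 1)) (w.Ceq x (m + 1)) := by
  rw [Set.disjoint_left]
  intro ω h1 h2
  exact h2.1 (h1 (m + 1) le_rfl)

lemma key_decomp (hk : 2 ≤ k) (hm : w.HasMoment ((k : ℝ) - 1))
    (x : Fin k → ℝ) (hx : x ∈ W k) (m : ℕ) :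
    Vdm x = (∫ ω in w.Agt x m, Vdm (w.pos x m ω) ∂w.P)
      + ∑ l ∈ Finset.range (m + 1), ∫ ω in w.Ceq x l, Vdm (w.pos x l ω) ∂w.P := by
  haveI := w.prob
  induction m with
  | zero =>
    have hA : w.Agt x 0 = Set.univ := by
      ext ω
      simp only [Walk.Agt, Set.mem_setOf_eq, Set.mem_univ, iff_true]
      intro s hs
      rw [Nat.le_zero.mp hs, w.pos_zero x ω]
      exact hx
    have hC : w.Ceq x 0 = ∅ := by
      ext ω
      simp only [Walk.Ceq, Set.mem_setOf_eq, Set.mem_empty_iff_false, iff_false]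
      rintro ⟨h1, _⟩
      exact h1 (by rw [w.pos_zero x ω]; exact hx)
    rw [hA, Finset.range_one, Finset.sum_singleton, hC, Measure.restrict_empty]
    simp only [Measure.restrict_univ, integral_zero_measure, add_zero]
    have : (fun ω => Vdm (w.pos x 0 ω)) = fun _ => Vdm x := by
      funext ω; rw [w.pos_zero x ω]
    rw [this, integral_const]
    simp
  | succ m ih =>
    rw [ih, ← w.step_integral hk hm x m]
    conv_rhs => rw [Finset.sum_range_succ]
    rw [Agt_split,
      setIntegral_union (w.Agt_Ceq_disjoint x m) (w.measurableSet_Ceq x (m + 1))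
        ((w.integrable_Vdm_pos hk hm x (m + 1)).integrableOn)
        ((w.integrable_Vdm_pos hk hm x (m + 1)).integrableOn)]
    ring

lemma exists_support_point (hk : 0 < k) :
    ∃ a : ℝ, ∀ δ : ℝ, 0 < δ →
      w.P ((w.ξ 0 ⟨0, hk⟩) ⁻¹' Metric.ball a δ) ≠ 0 := by
  haveI := w.prob
  by_contra hcon
  push_neg at hcon
  choose d hd1 hd2 using hcon
  obtain ⟨s, hsc, hseq⟩ := TopologicalSpace.isOpen_iUnion_countable
    (fun a : ℝ => Metric.ball a (d a)) (fun a => Metric.isOpen_ball)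
  have hcover : (⋃ a, Metric.ball a (d a)) = Set.univ := by
    ext z
    simp only [Set.mem_iUnion, Set.mem_univ, iff_true]
    exact ⟨z, Metric.mem_ball_self (hd1 z)⟩
  have huniv : (Set.univ : Set Ω) = ⋃ a ∈ s, (w.ξ 0 ⟨0, hk⟩) ⁻¹' Metric.ball a (d a) := by
    rw [← Set.preimage_iUnion₂, hseq, hcover]
    simp
  have hz : w.P (Set.univ : Set Ω) = 0 := by
    rw [huniv]
    exact (measure_biUnion_null_iff hsc).mpr fun a _ => hd2 a
  rw [measure_univ] at hz
  exact one_ne_zero hz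

lemma Agt_P_pos (hk : 2 ≤ k) (x : Fin k → ℝ) (hx : x ∈ W k) (n : ℕ) :
    0 < w.P (w.Agt x n) := by
  classical
  haveI := w.prob
  have hk0 : 0 < k := by omega
  obtain ⟨a, ha⟩ := w.exists_support_point hk0
  -- minimal gap
  set pairsF := Finset.univ.filter (fun p : Fin k × Fin k => p.1 < p.2) with hpF
  have hpairs : pairsF.Nonempty := by
    refine ⟨(⟨0, by omega⟩, ⟨1, by omega⟩), ?_⟩
    simp [hpF, Fin.mk_lt_mk]
  have himg : (pairsF.image (fun p => x p.2 - x p.1)).Nonempty := hpairs.image _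
  set d0 := (pairsF.image (fun p => x p.2 - x p.1)).min' himg with hd0
  have hd0pos : 0 < d0 := by
    rw [hd0]
    obtain ⟨p, hp, hpe⟩ := Finset.mem_image.mp ((pairsF.image _).min'_mem himg)
    rw [← hpe]
    rw [hpF, Finset.mem_filter] at hp
    exact sub_pos.mpr (hx hp.2)
  have hd0le : ∀ i j : Fin k, i < j → d0 ≤ x j - x i := by
    intro i j hij
    rw [hd0]
    exact Finset.min'_le _ _ (Finset.mem_image.mpr
      ⟨(i, j), by simp [hpF, hij], rfl⟩)
  set δ : ℝ := d0 / (2 * ((n : ℝ) + 1)) with hδ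
  have hδpos : 0 < δ := by
    apply div_pos hd0pos
    positivity
  set S : Finset (ℕ × Fin k) := (Finset.range (n + 1)) ×ˢ Finset.univ with hS
  set E : Set Ω := ⋂ p ∈ S, (fun q : ℕ × Fin k => w.ξ q.1 q.2) p ⁻¹' Metric.ball a δ
    with hE
  have hEP : w.P E = ∏ p ∈ S, w.P ((fun q : ℕ × Fin k => w.ξ q.1 q.2) p ⁻¹' Metric.ball a δ) :=
    w.indep.measure_inter_preimage_eq_mul S (fun p _ => measurableSet_ball)
  have hEpos : 0 < w.P E := by
    rw [hEP, pos_iff_ne_zero]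
    rw [Finset.prod_ne_zero_iff]
    intro p _
    have := (w.ident p.1 p.2 0 ⟨0, hk0⟩).measure_mem_eq (measurableSet_ball
      (x := a) (ε := δ))
    rw [this]
    exact ha δ hδpos
  refine lt_of_lt_of_le hEpos (measure_mono ?_)
  intro ω hω
  have hball : ∀ l ≤ n, ∀ i : Fin k, |w.ξ l i ω - a| < δ := by
    intro l hl i
    have := Set.mem_iInter₂.mp hω (l, i) (by
      simp [hS, Finset.mem_product, Nat.lt_succ_iff, hl])
    simpa [Real.dist_eq] using this
  intro s hs
  intro i j hij
  have hA : d0 ≤ x j - x i := hd0le i j hij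
  have hB : -(2 * δ) * (s : ℝ) ≤ ∑ l ∈ Finset.range s, (w.ξ l j ω - w.ξ l i ω) := by
    have h1 : ∀ l ∈ Finset.range s, -(2 * δ) ≤ w.ξ l j ω - w.ξ l i ω := by
      intro l hl
      have hls : l ≤ n := by
        rw [Finset.mem_range] at hl
        omega
      have hj := abs_lt.mp (hball l hls j)
      have hi := abs_lt.mp (hball l hls i)
      have hj1 := hj.1; have hj2 := hj.2
      have hi1 := hi.1; have hi2 := hi.2
      linarith
    calc -(2 * δ) * (s : ℝ) = ∑ _l ∈ Finset.range s, -(2 * δ) := by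
          rw [Finset.sum_const, Finset.card_range, nsmul_eq_mul]; ring
      _ ≤ _ := Finset.sum_le_sum h1
  have hC : 2 * δ * (s : ℝ) < d0 := by
    have h1 : (s : ℝ) ≤ (n : ℝ) := Nat.cast_le.mpr hs
    have h2 : (0 : ℝ) < (n : ℝ) + 1 := by positivity
    have h3 : 2 * δ * (s : ℝ) = d0 * (s : ℝ) / ((n : ℝ) + 1) := by
      rw [hδ]; field_simp
    rw [h3, div_lt_iff₀ h2]
    have h4 : d0 * (s : ℝ) ≤ d0 * (n : ℝ) :=
      mul_le_mul_of_nonneg_left h1 (le_of_lt hd0pos)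
    nlinarith
  show w.pos x s ω i < w.pos x s ω j
  simp only [Walk.pos]
  have hsum : ∑ l ∈ Finset.range s, w.ξ l j ω - ∑ l ∈ Finset.range s, w.ξ l i ω
      = ∑ l ∈ Finset.range s, (w.ξ l j ω - w.ξ l i ω) := by
    rw [Finset.sum_sub_distrib]
  have hspos : (0:ℝ) ≤ (s : ℝ) := Nat.cast_nonneg s
  nlinarith [hB, hA, hC, hsum]

end AuxWalk
end Walk

/-- `V_n(x) = E_x[Δ(X(n)) 1{τ > n}]`, and in particular `V_n(x) > 0`. -/
theorem Vn_repr_and_positive (k : ℕ) (hk : 2 ≤ k) (Ω : Type) [MeasurableSpace Ω]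
    (w : Walk k Ω) (hc : w.Centered) (hm : w.HasMoment ((k : ℝ) - 1))
    (n : ℕ) (hn : 1 ≤ n) (x : Fin k → ℝ) (hx : x ∈ W k) :
    w.Vn n x = (∫ ω in w.tauGT x (n : ℝ), Vdm (w.pos x n ω) ∂w.P) ∧ 0 < w.Vn n x := by
  classical
  haveI := w.prob
  -- the integral over `{τ ≤ n}` of the stopped determinant
  have hstop : (∫ ω in w.tauLE x (n : ℝ), Vdm (w.stopped x ω) ∂w.P)
      = ∑ l ∈ Finset.range (n + 1), ∫ ω in w.Ceq x l, Vdm (w.pos x l ω) ∂w.P := by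
    rw [w.tauLE_eq x n]
    rw [integral_biUnion_finset (Finset.range (n + 1))
      (fun l _ => w.measurableSet_Ceq x l)
      (fun l _ l' _ hne => w.Ceq_disjoint x hne)
      (fun l _ => ((w.integrable_Vdm_pos hk hm x l).integrableOn).congr_fun
        (fun ω hω => by rw [w.stopped_of_mem_Ceq x ω l hω])
        (w.measurableSet_Ceq x l))]
    refine Finset.sum_congr rfl fun l _ => ?_
    refine setIntegral_congr_fun (w.measurableSet_Ceq x l) fun ω hω => ?_
    rw [w.stopped_of_mem_Ceq x ω l hω]
  have hkey := w.key_decomp hk hm x hx n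
  have hVn : w.Vn n x = ∫ ω in w.Agt x n, Vdm (w.pos x n ω) ∂w.P := by
    rw [Walk.Vn, hstop, hkey]
    ring
  have hrepr : w.Vn n x = ∫ ω in w.tauGT x (n : ℝ), Vdm (w.pos x n ω) ∂w.P := by
    rw [hVn, w.tauGT_eq x n]
  refine ⟨hrepr, ?_⟩
  rw [hVn]
  have hnonneg : 0 ≤ᶠ[ae (w.P.restrict (w.Agt x n))] fun ω => Vdm (w.pos x n ω) := by
    rw [EventuallyLE, ae_restrict_iff' (w.measurableSet_Agt x n)]
    exact Eventually.of_forall fun ω hω => le_of_lt (Vdm_pos (hω n le_rfl))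
  rw [setIntegral_pos_iff_support_of_nonneg_ae hnonneg
    ((w.integrable_Vdm_pos hk hm x n).integrableOn)]
  refine lt_of_lt_of_le (w.Agt_P_pos hk x hx n) (measure_mono ?_)
  intro ω hω
  exact ⟨ne_of_gt (Vdm_pos (hω n le_rfl)), hω⟩

end OrderedRW
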